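/- Let A be a finite set with a conservative minority operation f and let k ≥ 1. For any relation U ⊆ A^k the following are equivalent: (1) f preserves U; (2) U is primitively positively definable from the following set of relations on A: (a) all unary relations X ⊆ A; (b) all subdirect transversal endomorphism graphs, i.e., graphs {(x, e(x)) : x ∈ A'} of surjective homomorphic retractions e of a subalgebra (A';f), A' ⊆ A, onto a subdirectly irreducible subalgebra (B;f) with B ⊆ A' (e : A' → B surjective, e(f(x,y,z)) = f(e(x),e(y),e(z)) for all x,y,z ∈ A', and e(b) = b for all b ∈ B); (c) all subdirect, functional, multisorted critical relations T ⊆ A₁ × ⋯ × Aₙ, for n ≥ 2 and subdirectly irreducible subalgebras (A₁;f),…,(Aₙ;f) with A_i ⊆ A. -/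

import Mathlib

/-- `f` is a Maltsev operation. -/
def IsMaltsevOp {α : Type*} (f : α → α → α → α) : Prop :=
  ∀ x y : α, f x x y = y ∧ f y x x = y

/-- `f` is a minority operation. -/
def IsMinorityOp {α : Type*} (f : α → α → α → α) : Prop :=
  ∀ x y : α, f x x y = y ∧ f x y x = y ∧ f y x x = y

/-- `f` is conservative. -/
def IsConservativeOp {α : Type*} (f : α → α → α → α) : Prop :=
  ∀ x y z : α, f x y z = x ∨ f x y z = y ∨ f x y z = z

/-- `f` preserves the binary relation `θ`. -/
def PreservesRel {α : Type*} (f : α → α → α → α) (θ : α → α → Prop) : Prop :=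
  ∀ a₁ b₁ a₂ b₂ a₃ b₃ : α, θ a₁ b₁ → θ a₂ b₂ → θ a₃ b₃ →
    θ (f a₁ a₂ a₃) (f b₁ b₂ b₃)

/-- A congruence of the algebra `(α; f)`. -/
def IsCong {α : Type*} (f : α → α → α → α) (θ : α → α → Prop) : Prop :=
  Equivalence θ ∧ PreservesRel f θ

/-- A block congruence: a congruence with at most one nontrivial class. -/
def IsBlockCong {α : Type*} (f : α → α → α → α) (θ : α → α → Prop) : Prop :=
  IsCong f θ ∧ ∀ a b c d : α, θ a b → a ≠ b → θ c d → c ≠ d → θ a c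

/-- A relation is nontrivial if it relates two distinct elements. -/
def NontrivialRel {α : Type*} (θ : α → α → Prop) : Prop :=
  ∃ a b, θ a b ∧ a ≠ b

/-- Containment of binary relations. -/
def RelLE {α : Type*} (θ₁ θ₂ : α → α → Prop) : Prop :=
  ∀ x y, θ₁ x y → θ₂ x y

/-- An atomic congruence: a nontrivial congruence such that every nontrivial
congruence contained in it equals it. -/
def IsAtomicCong {α : Type*} (f : α → α → α → α) (θ : α → α → Prop) : Prop :=
  IsCong f θ ∧ NontrivialRel θ ∧
    ∀ θ' : α → α → Prop, IsCong f θ' → NontrivialRel θ' → RelLE θ' θ →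
      ∀ x y, θ' x y ↔ θ x y

/-- `(α; f)` is subdirectly irreducible: it has exactly one atomic congruence. -/
def IsSubdirectlyIrred {α : Type*} (f : α → α → α → α) : Prop :=
  ∃ θ : α → α → Prop, IsAtomicCong f θ ∧
    ∀ θ' : α → α → Prop, IsAtomicCong f θ' → ∀ x y, θ' x y ↔ θ x y
/-- An equivalence relation on the subset `B` preserved by `f`, i.e. a
congruence of the subalgebra `(B; f)`. -/
def IsCongOn {α : Type*} (f : α → α → α → α) (B : Set α)
    (θ : α → α → Prop) : Prop :=
  (∀ x y, θ x y → x ∈ B ∧ y ∈ B) ∧ (∀ x ∈ B, θ x x) ∧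
    (∀ x y, θ x y → θ y x) ∧ (∀ x y z, θ x y → θ y z → θ x z) ∧
    PreservesRel f θ

/-- An atomic congruence of the subalgebra `(B; f)`. -/
def IsAtomicCongOn {α : Type*} (f : α → α → α → α) (B : Set α)
    (θ : α → α → Prop) : Prop :=
  IsCongOn f B θ ∧ NontrivialRel θ ∧
    ∀ θ' : α → α → Prop, IsCongOn f B θ' → NontrivialRel θ' → RelLE θ' θ →
      ∀ x y, θ' x y ↔ θ x y

/-- The subalgebra `(B; f)` is subdirectly irreducible. -/
def IsSIOn {α : Type*} (f : α → α → α → α) (B : Set α) : Prop :=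
  ∃ μ : α → α → Prop, IsAtomicCongOn f B μ ∧
    ∀ μ' : α → α → Prop, IsAtomicCongOn f B μ' → ∀ x y, μ' x y ↔ μ x y

/-- `f` preserves the `n`-ary relation `R`. -/
def PreservesSet {α : Type*} (f : α → α → α → α) {n : ℕ}
    (R : Set (Fin n → α)) : Prop :=
  ∀ t₁ t₂ t₃, t₁ ∈ R → t₂ ∈ R → t₃ ∈ R →
    (fun i => f (t₁ i) (t₂ i) (t₃ i)) ∈ R

/-- Encoding of a unary relation `X ⊆ α` as a relation of arity 1. -/
def unaryRel {α : Type*} (X : Set α) : Set (Fin 1 → α) := {t | t 0 ∈ X}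

/-- The graph `{(x, g x) : x ∈ D}` of a function restricted to `D`, as a
binary relation. -/
def graphRelOn {α : Type*} (D : Set α) (g : α → α) : Set (Fin 2 → α) :=
  {t | t 0 ∈ D ∧ t 1 = g (t 0)}

/-- `R ⊆ α^k` is primitively positively definable from the set `𝒮` of
relations (of various arities) on `α`: `R` is the set of `k`-tuples `x` such
that there exist `m` witnesses `y` satisfying a finite conjunction of atomic
formulas, each of which is either an atom `S(z₁,…,z_r)` with `S ∈ 𝒮` or an
equality `z = z'`, with variables among the entries of `x` and `y`. -/
def PPDefinable {α : Type*} (𝒮 : Set (Σ r : ℕ, Set (Fin r → α))) (k : ℕ)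
    (R : Set (Fin k → α)) : Prop :=
  ∃ (m : ℕ) (C : List (Σ r : ℕ, Set (Fin r → α) × (Fin r → Fin (k + m))))
    (E : List (Fin (k + m) × Fin (k + m))),
    (∀ c ∈ C, (⟨c.1, c.2.1⟩ : Σ r : ℕ, Set (Fin r → α)) ∈ 𝒮) ∧
    R = {x | ∃ y : Fin m → α,
      (∀ c ∈ C, (fun j => Fin.append x y (c.2.2 j)) ∈ c.2.1) ∧
      (∀ e ∈ E, Fin.append x y e.1 = Fin.append x y e.2)}


/-!
Every invariant `U` is the intersection of pp-definable relations `P ⊇ U` with `s ∉ P`, one for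
each `s ∉ U`; these are built by induction on the arity and the sizes of the projections of `U`.
If some `s i` lies outside the `i`-th projection of `U`, a unary relation separates. If some
coordinate `i` is inessential for `s` (no tuple of `U` agrees with `s` off `i`), the projection
of `U` deleting `i` separates. Otherwise take `T ⊇ U` maximal invariant avoiding `s` inside the
product of the projections: `s` is then a critical tuple of `T`. If `T` is functional, its
coordinate algebras are subdirectly irreducible and `T` is itself a generator. If not, tuples of
`T` differing only at some `i` form a congruence of the `i`-th projection; a maximal congruence
above it not identifying `s i` with the `i`-th entry of a tuple of `T` that differs from `s` only
at `i` is the kernel of a retraction onto a subdirectly irreducible quotient, and composing `T`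
with it at `i` gives a relation with a smaller projection, pp-definable by induction.
-/

section PPDefinable

variable {α : Type*} {𝒮 : Set (Σ r : ℕ, Set (Fin r → α))}

def SatisfiesAtoms {n : ℕ} (C : List (Σ r : ℕ, Set (Fin r → α) × (Fin r → Fin n)))
    (E : List (Fin n × Fin n)) (v : Fin n → α) : Prop :=
  (∀ c ∈ C, v ∘ c.2.2 ∈ c.2.1) ∧ ∀ e ∈ E, v e.1 = v e.2

def renameAtom {n n' : ℕ} (σ : Fin n → Fin n')
    (c : Σ r : ℕ, Set (Fin r → α) × (Fin r → Fin n)) :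
    Σ r : ℕ, Set (Fin r → α) × (Fin r → Fin n') :=
  ⟨c.1, c.2.1, σ ∘ c.2.2⟩

theorem satisfiesAtoms_rename {n n' : ℕ} (σ : Fin n → Fin n')
    {C : List (Σ r : ℕ, Set (Fin r → α) × (Fin r → Fin n))} {E : List (Fin n × Fin n)}
    {v : Fin n' → α} :
    SatisfiesAtoms (C.map (renameAtom σ)) (E.map (Prod.map σ σ)) v ↔
      SatisfiesAtoms C E (v ∘ σ) := by
  simp only [SatisfiesAtoms, List.forall_mem_map, renameAtom, Prod.map, Function.comp_assoc]
  rfl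

theorem satisfiesAtoms_append {n : ℕ} {C₁ C₂ : List (Σ r : ℕ, Set (Fin r → α) × (Fin r → Fin n))}
    {E₁ E₂ : List (Fin n × Fin n)} {v : Fin n → α} :
    SatisfiesAtoms (C₁ ++ C₂) (E₁ ++ E₂) v ↔ SatisfiesAtoms C₁ E₁ v ∧ SatisfiesAtoms C₂ E₂ v := by
  simp only [SatisfiesAtoms, List.mem_append, or_imp, forall_and]
  tauto

theorem ppDefinable_iff {k : ℕ} {R : Set (Fin k → α)} :
    PPDefinable 𝒮 k R ↔ ∃ (m : ℕ) (C : List (Σ r : ℕ, Set (Fin r → α) × (Fin r → Fin (k + m))))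
      (E : List (Fin (k + m) × Fin (k + m))), (∀ c ∈ C, ⟨c.1, c.2.1⟩ ∈ 𝒮) ∧
      R = {x | ∃ y : Fin m → α, SatisfiesAtoms C E (Fin.append x y)} :=
  Iff.rfl

theorem forall_mem_map_renameAtom {n n' : ℕ} (σ : Fin n → Fin n')
    {C : List (Σ r : ℕ, Set (Fin r → α) × (Fin r → Fin n))}
    (hC : ∀ c ∈ C, (⟨c.1, c.2.1⟩ : Σ r : ℕ, Set (Fin r → α)) ∈ 𝒮) :
    ∀ c ∈ C.map (renameAtom σ), (⟨c.1, c.2.1⟩ : Σ r : ℕ, Set (Fin r → α)) ∈ 𝒮 := by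
  simpa only [List.forall_mem_map, renameAtom] using hC

namespace PPDefinable

theorem of_mem {k r : ℕ} {S : Set (Fin r → α)} (hS : ⟨r, S⟩ ∈ 𝒮) (g : Fin r → Fin k) :
    PPDefinable 𝒮 k {x | x ∘ g ∈ S} := by
  refine ppDefinable_iff.2 ⟨0, [⟨r, S, Fin.castAdd 0 ∘ g⟩], [], by simpa using hS, ?_⟩
  ext x
  simp only [Set.mem_ofPred_eq, SatisfiesAtoms, List.mem_singleton, forall_eq, Function.comp_def,
    Fin.append_left, List.not_mem_nil, IsEmpty.forall_iff, implies_true, and_true, exists_const]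

theorem univ {k : ℕ} : PPDefinable 𝒮 k Set.univ :=
  ppDefinable_iff.2 ⟨0, [], [], by simp, by simp [SatisfiesAtoms]⟩

theorem inter {k : ℕ} {R₁ R₂ : Set (Fin k → α)} (h₁ : PPDefinable 𝒮 k R₁)
    (h₂ : PPDefinable 𝒮 k R₂) : PPDefinable 𝒮 k (R₁ ∩ R₂) := by
  obtain ⟨m₁, C₁, E₁, hC₁, rfl⟩ := ppDefinable_iff.1 h₁
  obtain ⟨m₂, C₂, E₂, hC₂, rfl⟩ := ppDefinable_iff.1 h₂
  let σ₁ : Fin (k + m₁) → Fin (k + (m₁ + m₂)) :=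
    Fin.append (Fin.castAdd _) (Fin.natAdd k ∘ Fin.castAdd m₂)
  let σ₂ : Fin (k + m₂) → Fin (k + (m₁ + m₂)) :=
    Fin.append (Fin.castAdd _) (Fin.natAdd k ∘ Fin.natAdd m₁)
  have hσ₁ (x : Fin k → α) (y₁ : Fin m₁ → α) (y₂ : Fin m₂ → α) :
      Fin.append x (Fin.append y₁ y₂) ∘ σ₁ = Fin.append x y₁ := by
    ext v; induction v using Fin.addCases <;> simp [σ₁]
  have hσ₂ (x : Fin k → α) (y₁ : Fin m₁ → α) (y₂ : Fin m₂ → α) :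
      Fin.append x (Fin.append y₁ y₂) ∘ σ₂ = Fin.append x y₂ := by
    ext v; induction v using Fin.addCases <;> simp [σ₂]
  refine ppDefinable_iff.2 ⟨m₁ + m₂, C₁.map (renameAtom σ₁) ++ C₂.map (renameAtom σ₂),
    E₁.map (Prod.map σ₁ σ₁) ++ E₂.map (Prod.map σ₂ σ₂), ?_, ?_⟩
  · simpa only [List.mem_append, or_imp, forall_and] using
      ⟨forall_mem_map_renameAtom σ₁ hC₁, forall_mem_map_renameAtom σ₂ hC₂⟩
  · ext x
    simp only [Set.mem_inter_iff, Set.mem_ofPred_eq, satisfiesAtoms_append, satisfiesAtoms_rename]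
    constructor
    · rintro ⟨⟨y₁, h₁⟩, ⟨y₂, h₂⟩⟩
      exact ⟨Fin.append y₁ y₂, by rwa [hσ₁], by rwa [hσ₂]⟩
    · rintro ⟨y, h₁, h₂⟩
      rw [← Fin.append_castAdd_natAdd (f := y), hσ₁] at h₁
      rw [← Fin.append_castAdd_natAdd (f := y), hσ₂] at h₂
      exact ⟨⟨_, h₁⟩, ⟨_, h₂⟩⟩

theorem comap {k k' : ℕ} {R : Set (Fin k' → α)} (h : PPDefinable 𝒮 k' R) (g : Fin k' → Fin k) :
    PPDefinable 𝒮 k {x | x ∘ g ∈ R} := by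
  obtain ⟨m, C, E, hC, rfl⟩ := ppDefinable_iff.1 h
  let σ : Fin (k' + m) → Fin (k + m) := Fin.append (Fin.castAdd m ∘ g) (Fin.natAdd k)
  have hσ (x : Fin k → α) (y : Fin m → α) : Fin.append x y ∘ σ = Fin.append (x ∘ g) y := by
    ext v; induction v using Fin.addCases <;> simp [σ]
  refine ppDefinable_iff.2 ⟨m, C.map (renameAtom σ), E.map (Prod.map σ σ),
    forall_mem_map_renameAtom σ hC, ?_⟩
  ext x
  simp only [Set.mem_ofPred_eq, satisfiesAtoms_rename, hσ]

theorem exists_append {k l : ℕ} {R : Set (Fin (k + l) → α)} (h : PPDefinable 𝒮 (k + l) R) :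
    PPDefinable 𝒮 k {x | ∃ z : Fin l → α, Fin.append x z ∈ R} := by
  obtain ⟨m, C, E, hC, rfl⟩ := ppDefinable_iff.1 h
  let σ : Fin (k + l + m) → Fin (k + (l + m)) := Fin.cast (Nat.add_assoc k l m)
  refine ppDefinable_iff.2 ⟨l + m, C.map (renameAtom σ), E.map (Prod.map σ σ),
    forall_mem_map_renameAtom σ hC, ?_⟩
  ext x
  simp only [Set.mem_ofPred_eq, satisfiesAtoms_rename]
  constructor
  · rintro ⟨z, y, h⟩
    exact ⟨Fin.append z y, by rwa [← Fin.append_assoc]⟩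
  · rintro ⟨y, h⟩
    rw [← Fin.append_castAdd_natAdd (f := y), ← Fin.append_assoc] at h
    exact ⟨_, _, h⟩

theorem iInter {k : ℕ} {ι : Type*} [Finite ι] {R : ι → Set (Fin k → α)}
    (h : ∀ i, PPDefinable 𝒮 k (R i)) : PPDefinable 𝒮 k (⋂ i, R i) := by
  classical
  cases nonempty_fintype ι
  rw [show (⋂ i, R i) = ⋂ i ∈ (Finset.univ : Finset ι), R i by simp]
  induction (Finset.univ : Finset ι) using Finset.induction_on with
  | empty => simpa using univ
  | insert i s _ ih => simpa only [Finset.set_biInter_insert] using (h i).inter ih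

theorem of_separating {k : ℕ} [Finite α] {U : Set (Fin k → α)}
    (h : ∀ s ∉ U, ∃ P, PPDefinable 𝒮 k P ∧ U ⊆ P ∧ s ∉ P) : PPDefinable 𝒮 k U := by
  choose P hP hUP hsP using h
  convert iInter (ι := {s // s ∉ U}) fun s => hP s.1 s.2
  ext x
  simp only [Set.mem_iInter, Subtype.forall]
  exact ⟨fun hx s hs => hUP s hs hx, fun hx => by_contra fun hxU => hsP x hxU (hx x hxU)⟩

theorem empty {k : ℕ} (h : ⟨1, unaryRel (∅ : Set α)⟩ ∈ 𝒮) : PPDefinable 𝒮 k ∅ := by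
  convert exists_append (l := 1) (of_mem h fun _ => Fin.natAdd k 0) using 1
  simp [unaryRel]

theorem exists_update {k : ℕ} {G : Set (Fin 2 → α)} (hG : ⟨2, G⟩ ∈ 𝒮) {R : Set (Fin k → α)}
    (hR : PPDefinable 𝒮 k R) (i : Fin k) :
    PPDefinable 𝒮 k {x | ∃ a, ![x i, a] ∈ G ∧ Function.update x i a ∈ R} := by
  let g : Fin k → Fin (k + 1) := fun j => if j = i then Fin.natAdd k 0 else Fin.castAdd 1 j
  have hG' (x : Fin k → α) (z : Fin 1 → α) :
      Fin.append x z ∘ ![Fin.castAdd 1 i, Fin.natAdd k 0] = ![x i, z 0] := by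
    ext j; fin_cases j <;> simp
  have hg (x : Fin k → α) (z : Fin 1 → α) :
      Fin.append x z ∘ g = Function.update x i (z 0) := by
    ext j; by_cases hj : j = i <;> simp [g, hj]
  convert exists_append (l := 1)
    ((of_mem hG ![Fin.castAdd 1 i, Fin.natAdd k 0]).inter (hR.comap g)) using 1
  ext x
  simp only [Set.mem_ofPred_eq, Set.mem_inter_iff, hG', hg]
  exact ⟨fun ⟨a, h⟩ => ⟨fun _ => a, h⟩, fun ⟨z, h⟩ => ⟨z 0, h⟩⟩

theorem preservesSet {f : α → α → α → α} (h𝒮 : ∀ p ∈ 𝒮, PreservesSet f p.2) {k : ℕ}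
    {R : Set (Fin k → α)} (hR : PPDefinable 𝒮 k R) : PreservesSet f R := by
  obtain ⟨m, C, E, hC, rfl⟩ := ppDefinable_iff.1 hR
  have happend {n : ℕ} (x₁ x₂ x₃ : Fin k → α) (y₁ y₂ y₃ : Fin n → α) :
      Fin.append (fun i => f (x₁ i) (x₂ i) (x₃ i)) (fun i => f (y₁ i) (y₂ i) (y₃ i)) =
        fun v => f (Fin.append x₁ y₁ v) (Fin.append x₂ y₂ v) (Fin.append x₃ y₃ v) := by
    ext v; induction v using Fin.addCases <;> simp
  rintro x₁ x₂ x₃ ⟨y₁, hC₁, hE₁⟩ ⟨y₂, hC₂, hE₂⟩ ⟨y₃, hC₃, hE₃⟩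
  refine ⟨fun i => f (y₁ i) (y₂ i) (y₃ i), fun c hc => ?_, fun e he => ?_⟩
  · rw [happend]
    exact h𝒮 _ (hC c hc) _ _ _ (hC₁ c hc) (hC₂ c hc) (hC₃ c hc)
  · simp only [happend, hE₁ e he, hE₂ e he, hE₃ e he]

end PPDefinable

end PPDefinable

section Congruences

variable {α : Type*} {f : α → α → α → α}

theorem IsConservativeOp.apply_mem (hcons : IsConservativeOp f) {B : Set α} {x y z : α}
    (hx : x ∈ B) (hy : y ∈ B) (hz : z ∈ B) : f x y z ∈ B := by
  rcases hcons x y z with h | h | h <;> rw [h] <;> assumption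

theorem IsConservativeOp.preservesSet_unaryRel (hcons : IsConservativeOp f) (X : Set α) :
    PreservesSet f (unaryRel X) :=
  fun _ _ _ h₁ h₂ h₃ => hcons.apply_mem h₁ h₂ h₃

theorem PreservesSet.image_comp {k k' : ℕ} {U : Set (Fin k → α)} (hU : PreservesSet f U)
    (g : Fin k' → Fin k) : PreservesSet f ((· ∘ g) '' U) := by
  rintro _ _ _ ⟨u₁, hu₁, rfl⟩ ⟨u₂, hu₂, rfl⟩ ⟨u₃, hu₃, rfl⟩
  exact ⟨_, hU _ _ _ hu₁ hu₂ hu₃, rfl⟩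

theorem isCongOn_univ (hcons : IsConservativeOp f) (B : Set α) :
    IsCongOn f B (fun x y => x ∈ B ∧ y ∈ B) :=
  ⟨fun _ _ h => h, fun _ hx => ⟨hx, hx⟩, fun _ _ h => ⟨h.2, h.1⟩, fun _ _ _ h h' => ⟨h.1, h'.2⟩,
    fun _ _ _ _ _ _ h₁ h₂ h₃ =>
      ⟨hcons.apply_mem h₁.1 h₂.1 h₃.1, hcons.apply_mem h₁.2 h₂.2 h₃.2⟩⟩

/-- The monolith is the congruence generated by `(p, q)`. -/
theorem isSIOn_of_forall_rel (hcons : IsConservativeOp f) {B : Set α} {p q : α}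
    (hp : p ∈ B) (hq : q ∈ B) (hpq : p ≠ q)
    (H : ∀ θ, IsCongOn f B θ → NontrivialRel θ → θ p q) : IsSIOn f B := by
  let μ : α → α → Prop := fun x y => ∀ θ, IsCongOn f B θ → θ p q → θ x y
  have hμ : IsCongOn f B μ :=
    ⟨fun x y h => h _ (isCongOn_univ hcons B) ⟨hp, hq⟩,
      fun x hx θ hθ _ => hθ.2.1 x hx,
      fun x y h θ hθ hθpq => hθ.2.2.1 x y (h θ hθ hθpq),
      fun x y z h h' θ hθ hθpq => hθ.2.2.2.1 x y z (h θ hθ hθpq) (h' θ hθ hθpq),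
      fun _ _ _ _ _ _ h₁ h₂ h₃ θ hθ hθpq =>
        hθ.2.2.2.2 _ _ _ _ _ _ (h₁ θ hθ hθpq) (h₂ θ hθ hθpq) (h₃ θ hθ hθpq)⟩
  have hμnt : NontrivialRel μ := ⟨p, q, fun θ _ h => h, hpq⟩
  refine ⟨μ, ⟨hμ, hμnt, fun θ hθ hθnt hθμ x y => ⟨hθμ x y, fun h => h θ hθ (H θ hθ hθnt)⟩⟩,
    fun μ' hμ' x y => (hμ'.2.2 μ hμ hμnt (fun a b h => h μ' hμ'.1 (H μ' hμ'.1 hμ'.2.1)) x y).symm⟩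

noncomputable def classRep (η : α → α → Prop) (x : α) : α :=
  @Classical.epsilon α ⟨x⟩ (η x)

namespace IsCongOn

variable {B : Set α} {η : α → α → Prop} (hη : IsCongOn f B η)
include hη

theorem rel_classRep {x : α} (hx : x ∈ B) : η x (classRep η x) :=
  @Classical.epsilon_spec α (η x) ⟨x, hη.2.1 x hx⟩

theorem classRep_mem {x : α} (hx : x ∈ B) : classRep η x ∈ B :=
  (hη.1 _ _ (hη.rel_classRep hx)).2

theorem classRep_eq_of_rel {a b : α} (hab : η a b) : classRep η a = classRep η b := by
  have : η a = η b := funext fun y => propext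
    ⟨hη.2.2.2.1 _ _ _ (hη.2.2.1 _ _ hab), hη.2.2.2.1 _ _ _ hab⟩
  simp only [classRep, this]

theorem classRep_eq_iff {a b : α} (ha : a ∈ B) (hb : b ∈ B) :
    classRep η a = classRep η b ↔ η a b := by
  refine ⟨fun h => hη.2.2.2.1 _ _ _ (hη.rel_classRep ha) ?_, hη.classRep_eq_of_rel⟩
  exact h ▸ hη.2.2.1 _ _ (hη.rel_classRep hb)

theorem classRep_classRep {x : α} (hx : x ∈ B) : classRep η (classRep η x) = classRep η x :=
  (hη.classRep_eq_of_rel (hη.rel_classRep hx)).symm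

theorem classRep_apply (hcons : IsConservativeOp f) {x y z : α} (hx : x ∈ B) (hy : y ∈ B)
    (hz : z ∈ B) : classRep η (f x y z) = f (classRep η x) (classRep η y) (classRep η z) := by
  have hfix : classRep η (f (classRep η x) (classRep η y) (classRep η z)) =
      f (classRep η x) (classRep η y) (classRep η z) := by
    rcases hcons (classRep η x) (classRep η y) (classRep η z) with h | h | h <;> rw [h]
    exacts [hη.classRep_classRep hx, hη.classRep_classRep hy, hη.classRep_classRep hz]
  rw [← hfix]
  exact hη.classRep_eq_of_rel
    (hη.2.2.2.2 _ _ _ _ _ _ (hη.rel_classRep hx) (hη.rel_classRep hy) (hη.rel_classRep hz))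

theorem classRep_image_ssubset {a b : α} (ha : a ∈ B) (hb : b ∈ B) (hab : η a b) (hne : a ≠ b) :
    classRep η '' B ⊂ B := by
  refine (Set.image_subset_iff.2 fun x hx => hη.classRep_mem hx).ssubset_of_ne fun h => hne ?_
  have fixed {x : α} (hx : x ∈ B) : classRep η x = x := by
    obtain ⟨y, hy, rfl⟩ := h ▸ hx
    exact hη.classRep_classRep hy
  rw [← fixed ha, ← fixed hb, hη.classRep_eq_of_rel hab]

end IsCongOn

/-- `classRep η '' B` is a copy of the quotient `B / η`; its monolith is generated by the images
of `p` and `q`. -/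
theorem isSIOn_image_classRep (hcons : IsConservativeOp f) {B : Set α} {η : α → α → Prop}
    {p q : α} (hp : p ∈ B) (hq : q ∈ B) (hη : Maximal (fun θ => IsCongOn f B θ ∧ ¬θ p q) η) :
    IsSIOn f (classRep η '' B) := by
  obtain ⟨hηB, hηpq⟩ := hη.1
  refine isSIOn_of_forall_rel hcons ⟨p, hp, rfl⟩ ⟨q, hq, rfl⟩
    (fun h => hηpq ((hηB.classRep_eq_iff hp hq).1 h)) fun θ hθ ⟨u, v, huv, hne⟩ => ?_
  let θ' : α → α → Prop := fun x y => x ∈ B ∧ y ∈ B ∧ θ (classRep η x) (classRep η y)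
  have hθ' : IsCongOn f B θ' :=
    ⟨fun _ _ h => ⟨h.1, h.2.1⟩,
      fun x hx => ⟨hx, hx, hθ.2.1 _ ⟨x, hx, rfl⟩⟩,
      fun _ _ h => ⟨h.2.1, h.1, hθ.2.2.1 _ _ h.2.2⟩,
      fun _ _ _ h h' => ⟨h.1, h'.2.1, hθ.2.2.2.1 _ _ _ h.2.2 h'.2.2⟩,
      fun _ _ _ _ _ _ h₁ h₂ h₃ => ⟨hcons.apply_mem h₁.1 h₂.1 h₃.1,
        hcons.apply_mem h₁.2.1 h₂.2.1 h₃.2.1, by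
          rw [hηB.classRep_apply hcons h₁.1 h₂.1 h₃.1,
            hηB.classRep_apply hcons h₁.2.1 h₂.2.1 h₃.2.1]
          exact hθ.2.2.2.2 _ _ _ _ _ _ h₁.2.2 h₂.2.2 h₃.2.2⟩⟩
  have hηθ' : η ≤ θ' := fun x y h => by
    obtain ⟨hx, hy⟩ := hηB.1 x y h
    refine ⟨hx, hy, ?_⟩
    rw [hηB.classRep_eq_of_rel h]
    exact hθ.2.1 _ ⟨y, hy, rfl⟩
  by_contra hθpq
  obtain ⟨⟨u, hu, rfl⟩, ⟨v, hv, rfl⟩⟩ := hθ.1 _ _ huv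
  have huv' : θ' (classRep η u) (classRep η v) := ⟨hηB.classRep_mem hu, hηB.classRep_mem hv,
    by rwa [hηB.classRep_classRep hu, hηB.classRep_classRep hv]⟩
  have := hηB.classRep_eq_of_rel (hη.2 ⟨hθ', fun h => hθpq h.2.2⟩ hηθ' _ _ huv')
  rw [hηB.classRep_classRep hu, hηB.classRep_classRep hv] at this
  exact hne this

end Congruences

section Critical

variable {α : Type*} {f : α → α → α → α} {n : ℕ}

def IsFunctionalRel (T : Set (Fin n → α)) : Prop :=
  ∀ t ∈ T, ∀ t' ∈ T, ∀ i : Fin n, (∀ j, j ≠ i → t j = t' j) → t = t'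

def IsCriticalTuple (f : α → α → α → α) (A : Fin n → Set α) (T : Set (Fin n → α))
    (s : Fin n → α) : Prop :=
  (∀ i, s i ∈ A i) ∧ s ∉ T ∧
    (∀ S : Set (Fin n → α), (∀ t ∈ S, ∀ i, t i ∈ A i) → PreservesSet f S → T ⊂ S → s ∈ S) ∧
    ∀ i : Fin n, ∃ t ∈ T, ∀ j, j ≠ i → t j = s j

def fiberRel (T : Set (Fin n → α)) (i : Fin n) (a b : α) : Prop :=
  ∃ t ∈ T, ∃ t' ∈ T, (∀ j, j ≠ i → t j = t' j) ∧ t i = a ∧ t' i = b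

variable {T : Set (Fin n → α)}

theorem isCongOn_fiberRel (hmin : IsMinorityOp f) (hT : PreservesSet f T) (i : Fin n) :
    IsCongOn f (Function.eval i '' T) (fiberRel T i) := by
  refine ⟨?_, ?_, ?_, ?_, ?_⟩
  · rintro _ _ ⟨t, ht, t', ht', -, rfl, rfl⟩
    exact ⟨⟨t, ht, rfl⟩, ⟨t', ht', rfl⟩⟩
  · rintro _ ⟨t, ht, rfl⟩
    exact ⟨t, ht, t, ht, fun _ _ => rfl, rfl, rfl⟩
  · rintro _ _ ⟨t, ht, t', ht', htt', rfl, rfl⟩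
    exact ⟨t', ht', t, ht, fun j hj => (htt' j hj).symm, rfl, rfl⟩
  · -- the minority term `f u t' t` agrees with `u'` off `i` and with `t` at `i`
    rintro _ _ _ ⟨t, ht, t', ht', htt', rfl, rfl⟩ ⟨u, hu, u', hu', huu', hui, rfl⟩
    refine ⟨fun j => f (u j) (t' j) (t j), hT _ _ _ hu ht' ht, u', hu', fun j hj => ?_, ?_, rfl⟩
    · simp only [← htt' j hj, huu' j hj, (hmin (t j) (u' j)).2.2]
    · simp only [hui, (hmin (t' i) (t i)).1]
  · rintro _ _ _ _ _ _ ⟨t₁, h₁, t₁', h₁', h₁₁, rfl, rfl⟩ ⟨t₂, h₂, t₂', h₂', h₂₂, rfl, rfl⟩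
      ⟨t₃, h₃, t₃', h₃', h₃₃, rfl, rfl⟩
    exact ⟨_, hT _ _ _ h₁ h₂ h₃, _, hT _ _ _ h₁' h₂' h₃',
      fun j hj => by simp only [h₁₁ j hj, h₂₂ j hj, h₃₃ j hj], rfl, rfl⟩

theorem not_fiberRel (hmin : IsMinorityOp f) (hT : PreservesSet f T) {i : Fin n}
    {t s : Fin n → α} (ht : t ∈ T) (hts : ∀ j, j ≠ i → t j = s j) (hs : s ∉ T) :
    ¬fiberRel T i (t i) (s i) := by
  rintro ⟨u, hu, u', hu', huu', hui, hu'i⟩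
  suffices (fun j => f (t j) (u j) (u' j)) = s from hs (this ▸ hT _ _ _ ht hu hu')
  ext j
  by_cases hj : j = i
  · subst hj; rw [hui, hu'i, (hmin _ _).1]
  · rw [huu' j hj, (hmin _ _).2.2, hts j hj]

theorem exists_isCriticalTuple [Finite α] {U : Set (Fin n → α)} (hU : PreservesSet f U)
    {s : Fin n → α} (hs : s ∉ U) (hsU : ∀ i, s i ∈ Function.eval i '' U)
    (hess : ∀ i, ∃ t ∈ U, ∀ j, j ≠ i → t j = s j) :
    ∃ T, U ⊆ T ∧ PreservesSet f T ∧ (∀ t ∈ T, ∀ i, t i ∈ Function.eval i '' U) ∧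
      IsCriticalTuple f (fun i => Function.eval i '' U) T s := by
  obtain ⟨T, hUT, hT⟩ := Finite.exists_le_maximal
    (p := fun S : Set (Fin n → α) =>
      PreservesSet f S ∧ (∀ t ∈ S, ∀ i, t i ∈ Function.eval i '' U) ∧ s ∉ S)
    ⟨hU, fun t ht i => ⟨t, ht, rfl⟩, hs⟩
  obtain ⟨hTp, hTU, hsT⟩ := hT.1
  refine ⟨T, hUT, hTp, hTU, hsU, hsT,
    fun S hSU hSp hTS => by_contra fun hsS => hTS.2 (hT.2 ⟨hSp, hSU, hsS⟩ hTS.1), fun i => ?_⟩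
  obtain ⟨t, ht, hts⟩ := hess i
  exact ⟨t, hUT ht, hts⟩

/-- A nontrivial congruence `θ` of `A i` enlarges `T` to the invariant relation of tuples that are
`θ`-related at `i` to a tuple of `T`; this contains `s`, and functionality pins down the witness. -/
theorem IsCriticalTuple.isSIOn (hcons : IsConservativeOp f) {A : Fin n → Set α}
    (hT : PreservesSet f T) (hTA : ∀ t ∈ T, ∀ i, t i ∈ A i)
    (hAT : ∀ i, ∀ a ∈ A i, ∃ t ∈ T, t i = a) (hfun : IsFunctionalRel T) {s : Fin n → α}
    (hs : IsCriticalTuple f A T s) (i : Fin n) : IsSIOn f (A i) := by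
  obtain ⟨hsA, hsT, hcrit, hess⟩ := hs
  obtain ⟨t₀, ht₀, ht₀s⟩ := hess i
  have hne : t₀ i ≠ s i := fun h => hsT <| by
    convert ht₀ using 1
    ext j; by_cases hj : j = i
    · rw [hj, h]
    · rw [ht₀s j hj]
  refine isSIOn_of_forall_rel hcons (hTA t₀ ht₀ i) (hsA i) hne fun θ hθ ⟨a, b, hab, hab'⟩ => ?_
  let S : Set (Fin n → α) := {u | ∃ t ∈ T, (∀ j, j ≠ i → u j = t j) ∧ θ (t i) (u i)}
  have hTS : T ⊆ S := fun t ht => ⟨t, ht, fun _ _ => rfl, hθ.2.1 _ (hTA t ht i)⟩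
  have hSA : ∀ u ∈ S, ∀ j, u j ∈ A j := by
    rintro u ⟨t, ht, htu, hθu⟩ j
    by_cases hj : j = i
    · subst hj; exact (hθ.1 _ _ hθu).2
    · rw [htu j hj]; exact hTA t ht j
  have hSp : PreservesSet f S := by
    rintro _ _ _ ⟨t₁, h₁, hu₁, hθ₁⟩ ⟨t₂, h₂, hu₂, hθ₂⟩ ⟨t₃, h₃, hu₃, hθ₃⟩
    exact ⟨_, hT _ _ _ h₁ h₂ h₃, fun j hj => by simp only [hu₁ j hj, hu₂ j hj, hu₃ j hj],
      hθ.2.2.2.2 _ _ _ _ _ _ hθ₁ hθ₂ hθ₃⟩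
  have hTS' : T ⊂ S := by
    obtain ⟨t, ht, rfl⟩ := hAT i _ (hθ.1 _ _ hab).1
    refine (Set.ssubset_iff_of_subset hTS).2 ⟨Function.update t i b,
      ⟨t, ht, fun j hj => Function.update_of_ne hj _ _, by rwa [Function.update_self]⟩, ?_⟩
    intro hbT
    have := congrFun (hfun _ hbT t ht i fun j hj => Function.update_of_ne hj _ _) i
    exact hab' (by rwa [Function.update_self, eq_comm] at this)
  obtain ⟨t, ht, hts, hθs⟩ := hcrit S hSA hSp hTS'
  rwa [hfun t ht t₀ ht₀ i fun j hj => (hts j hj).symm.trans (ht₀s j hj).symm] at hθs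

end Critical

section Generators

variable {α : Type*} {f : α → α → α → α}

def IsTransversalEndGraph (f : α → α → α → α) (p : Σ r : ℕ, Set (Fin r → α)) : Prop :=
  ∃ (A' B : Set α) (e : α → α), B ⊆ A' ∧ IsSIOn f B ∧
    (∀ x ∈ A', e x ∈ B) ∧ (∀ b ∈ B, ∃ x ∈ A', e x = b) ∧
    (∀ x ∈ A', ∀ y ∈ A', ∀ z ∈ A', e (f x y z) = f (e x) (e y) (e z)) ∧
    (∀ b ∈ B, e b = b) ∧ p = ⟨2, graphRelOn A' e⟩

def IsFunctionalCriticalRel (f : α → α → α → α) (p : Σ r : ℕ, Set (Fin r → α)) : Prop :=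
  ∃ n : ℕ, 2 ≤ n ∧ ∃ (A : Fin n → Set α) (T : Set (Fin n → α)),
    (∀ i, IsSIOn f (A i)) ∧ (∀ t ∈ T, ∀ i, t i ∈ A i) ∧ PreservesSet f T ∧
    (∀ i, ∀ a ∈ A i, ∃ t ∈ T, t i = a) ∧ IsFunctionalRel T ∧
    (∃ s, IsCriticalTuple f A T s) ∧ p = ⟨n, T⟩

def genRels (f : α → α → α → α) : Set (Σ r : ℕ, Set (Fin r → α)) :=
  {p | (∃ X : Set α, p = ⟨1, unaryRel X⟩) ∨ IsTransversalEndGraph f p ∨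
    IsFunctionalCriticalRel f p}

theorem preservesSet_of_mem_genRels (hcons : IsConservativeOp f) {p : Σ r : ℕ, Set (Fin r → α)}
    (hp : p ∈ genRels f) : PreservesSet f p.2 := by
  rcases hp with ⟨X, rfl⟩ | ⟨A', B, e, -, -, -, -, he, -, rfl⟩ |
    ⟨n, -, A, T, -, -, hT, -, -, -, rfl⟩
  · exact hcons.preservesSet_unaryRel X
  · rintro t₁ t₂ t₃ ⟨h₁, e₁⟩ ⟨h₂, e₂⟩ ⟨h₃, e₃⟩
    exact ⟨hcons.apply_mem h₁ h₂ h₃, by simp only [e₁, e₂, e₃, he _ h₁ _ h₂ _ h₃]⟩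
  · exact hT

theorem isTransversalEndGraph_classRep (hcons : IsConservativeOp f) {B : Set α}
    {η : α → α → Prop} {p q : α} (hp : p ∈ B) (hq : q ∈ B)
    (hη : Maximal (fun θ => IsCongOn f B θ ∧ ¬θ p q) η) :
    IsTransversalEndGraph f ⟨2, graphRelOn B (classRep η)⟩ :=
  have hηB := hη.1.1
  ⟨B, classRep η '' B, classRep η, Set.image_subset_iff.2 fun _ => hηB.classRep_mem,
    isSIOn_image_classRep hcons hp hq hη, fun x hx => ⟨x, hx, rfl⟩, fun _ => id,
    fun _ hx _ hy _ hz => hηB.classRep_apply hcons hx hy hz,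
    fun _ ⟨_, hx, hb⟩ => hb ▸ hηB.classRep_classRep hx, rfl⟩

end Generators

section Separation

variable {α : Type*} {f : α → α → α → α}

/-- Deleting a coordinate and shrinking the projection onto a coordinate both decrease it. -/
noncomputable def projMeasure {k : ℕ} (U : Set (Fin k → α)) : ℕ :=
  ∑ i, ((Function.eval i '' U).ncard + 1)

theorem projMeasure_lt_of_ssubset [Finite α] {k : ℕ} {U V : Set (Fin k → α)}
    (hle : ∀ j, Function.eval j '' V ⊆ Function.eval j '' U) {i : Fin k}
    (hlt : Function.eval i '' V ⊂ Function.eval i '' U) : projMeasure V < projMeasure U :=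
  Finset.sum_lt_sum (fun j _ => Nat.add_le_add_right (Set.ncard_le_ncard (hle j)) 1)
    ⟨i, Finset.mem_univ _, Nat.add_lt_add_right (Set.ncard_lt_ncard hlt) 1⟩

theorem projMeasure_image_comp_succAbove_lt {k : ℕ} (U : Set (Fin (k + 1) → α))
    (i : Fin (k + 1)) : projMeasure ((· ∘ i.succAbove) '' U) < projMeasure U := by
  rw [projMeasure, projMeasure, Fin.sum_univ_succAbove _ i]
  simp only [Set.image_image, Function.eval, Function.comp_apply]
  omega

theorem projMeasure_image_update_lt [Finite α] {k : ℕ} {U T : Set (Fin k → α)}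
    (hTU : ∀ t ∈ T, ∀ j, t j ∈ Function.eval j '' U) {i : Fin k} {e : α → α}
    (he : e '' (Function.eval i '' U) ⊂ Function.eval i '' U) :
    projMeasure ((fun t => Function.update t i (e (t i))) '' T) < projMeasure U := by
  have hei {t : Fin k → α} (ht : t ∈ T) : e (t i) ∈ e '' (Function.eval i '' U) :=
    Set.mem_image_of_mem e (hTU t ht i)
  refine projMeasure_lt_of_ssubset (i := i) ?_ (lt_of_le_of_lt ?_ he)
  · rintro j _ ⟨_, ⟨t, ht, rfl⟩, rfl⟩
    by_cases hj : j = i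
    · simp only [Function.eval, hj, Function.update_self]
      exact he.1 (hei ht)
    · simp only [Function.eval, Function.update_of_ne hj]
      exact hTU t ht j
  · rintro _ ⟨_, ⟨t, ht, rfl⟩, rfl⟩
    simp only [Function.eval, Function.update_self]
    exact hei ht

theorem PreservesSet.image_update {k : ℕ} {T : Set (Fin k → α)} (hT : PreservesSet f T)
    (i : Fin k) {e : α → α} (he : ∀ x ∈ Function.eval i '' T, ∀ y ∈ Function.eval i '' T,
      ∀ z ∈ Function.eval i '' T, e (f x y z) = f (e x) (e y) (e z)) :
    PreservesSet f ((fun t => Function.update t i (e (t i))) '' T) := by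
  rintro _ _ _ ⟨t₁, h₁, rfl⟩ ⟨t₂, h₂, rfl⟩ ⟨t₃, h₃, rfl⟩
  refine ⟨_, hT _ _ _ h₁ h₂ h₃, funext fun j => ?_⟩
  by_cases hj : j = i
  · subst hj
    simp [he _ ⟨t₁, h₁, rfl⟩ _ ⟨t₂, h₂, rfl⟩ _ ⟨t₃, h₃, rfl⟩]
  · simp [Function.update_of_ne hj]

theorem two_le_of_not_mem {k : ℕ} {U : Set (Fin k → α)} (hne : U.Nonempty) {s : Fin k → α}
    (hsU : ∀ i, s i ∈ Function.eval i '' U) (hs : s ∉ U) : 2 ≤ k := by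
  by_contra! hk
  obtain ⟨t, ht, rfl⟩ : ∃ t ∈ U, t = s := by
    interval_cases k
    · obtain ⟨t, ht⟩ := hne
      exact ⟨t, ht, Subsingleton.elim _ _⟩
    · obtain ⟨t, ht, ht0⟩ := hsU 0
      exact ⟨t, ht, funext fun j => by rwa [Fin.fin_one_eq_zero j]⟩
  exact hs ht

variable [Finite α] {k : ℕ}

theorem exists_separating_of_not_isFunctionalRel (hcons : IsConservativeOp f)
    (hmin : IsMinorityOp f) {U T : Set (Fin k → α)} {s : Fin k → α}
    (ih : ∀ V : Set (Fin k → α), projMeasure V < projMeasure U → PreservesSet f V →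
      PPDefinable (genRels f) k V)
    (hUT : U ⊆ T) (hT : PreservesSet f T) (hTU : ∀ t ∈ T, ∀ i, t i ∈ Function.eval i '' U)
    (hs : IsCriticalTuple f (fun i => Function.eval i '' U) T s) (hfun : ¬IsFunctionalRel T) :
    ∃ P, PPDefinable (genRels f) k P ∧ U ⊆ P ∧ s ∉ P := by
  obtain ⟨hsU, hsT, -, hess⟩ := hs
  simp only [IsFunctionalRel, not_forall] at hfun
  obtain ⟨w, hw, w', hw', i, hww', hne⟩ := hfun
  obtain ⟨t₀, ht₀, ht₀s⟩ := hess i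
  set B := Function.eval i '' U
  have hTB : Function.eval i '' T = B := by
    refine Set.Subset.antisymm ?_ (Set.image_mono hUT)
    rintro _ ⟨t, ht, rfl⟩
    exact hTU t ht i
  obtain ⟨η, hση, hη⟩ := Finite.exists_le_maximal
    (p := fun θ => IsCongOn f B θ ∧ ¬θ (t₀ i) (s i))
    ⟨hTB ▸ isCongOn_fiberRel hmin hT i, not_fiberRel hmin hT ht₀ ht₀s hsT⟩
  have hηB : IsCongOn f B η := hη.1.1
  set e := classRep η
  set T₀ := (fun t => Function.update t i (e (t i))) '' T
  have hT₀ : PreservesSet f T₀ :=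
    hT.image_update i fun x hx y hy z hz =>
      hηB.classRep_apply hcons (hTB ▸ hx) (hTB ▸ hy) (hTB ▸ hz)
  have hwi : w i ≠ w' i := fun h => hne <| funext fun j => by
    by_cases hj : j = i
    · rw [hj, h]
    · exact hww' j hj
  have hT₀U : projMeasure T₀ < projMeasure U :=
    projMeasure_image_update_lt hTU (hηB.classRep_image_ssubset (hTU w hw i) (hTU w' hw' i)
      (hση _ _ ⟨w, hw, w', hw', hww', rfl, rfl⟩) hwi)
  refine ⟨{x | ∃ a, ![x i, a] ∈ graphRelOn B e ∧ Function.update x i a ∈ T₀},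
    (ih T₀ hT₀U hT₀).exists_update
      (Or.inr (Or.inl (isTransversalEndGraph_classRep hcons (hTU t₀ ht₀ i) (hsU i) hη))) i,
    fun u hu => ⟨e (u i), ⟨⟨u, hu, rfl⟩, rfl⟩, u, hUT hu, rfl⟩, ?_⟩
  -- a tuple `t ∈ T` collapsing onto `s` would link `t₀ i` and `s i` in `η` through `t i`
  rintro ⟨a, ⟨-, ha⟩, t, ht, hts⟩
  simp only [Matrix.cons_val_one, Matrix.cons_val_zero] at ha
  subst ha
  have hts' (j : Fin k) (hj : j ≠ i) : t j = s j := by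
    simpa [Function.update_of_ne hj] using congrFun hts j
  have hti : e (t i) = e (s i) := by simpa using congrFun hts i
  have ht₀t : e (t₀ i) = e (t i) := hηB.classRep_eq_of_rel
    (hση _ _ ⟨t₀, ht₀, t, ht, fun j hj => (ht₀s j hj).trans (hts' j hj).symm, rfl, rfl⟩)
  exact hη.1.2 ((hηB.classRep_eq_iff (hTU t₀ ht₀ i) (hsU i)).1 (ht₀t.trans hti))

theorem exists_separating (hcons : IsConservativeOp f) (hmin : IsMinorityOp f)
    {U : Set (Fin k → α)} (hU : PreservesSet f U)
    (ih : ∀ (k' : ℕ) (V : Set (Fin k' → α)), projMeasure V < projMeasure U → PreservesSet f V →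
      PPDefinable (genRels f) k' V)
    {s : Fin k → α} (hs : s ∉ U) : ∃ P, PPDefinable (genRels f) k P ∧ U ⊆ P ∧ s ∉ P := by
  rcases U.eq_empty_or_nonempty with rfl | hne
  · exact ⟨∅, PPDefinable.empty (Or.inl ⟨∅, rfl⟩), subset_rfl, id⟩
  by_cases hsU : ∃ i, s i ∉ Function.eval i '' U
  · obtain ⟨i, hi⟩ := hsU
    exact ⟨{x | x ∘ (fun _ => i) ∈ unaryRel (Function.eval i '' U)},
      PPDefinable.of_mem (Or.inl ⟨_, rfl⟩) _, fun t ht => ⟨t, ht, rfl⟩, hi⟩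
  push Not at hsU
  by_cases hess : ∃ i, ∀ t ∈ U, ¬∀ j, j ≠ i → t j = s j
  · obtain ⟨i, hi⟩ := hess
    obtain ⟨n, rfl⟩ : ∃ n, k = n + 1 := Nat.exists_eq_succ_of_ne_zero i.pos.ne'
    refine ⟨{x | x ∘ i.succAbove ∈ (· ∘ i.succAbove) '' U},
      (ih _ _ (projMeasure_image_comp_succAbove_lt U i) (hU.image_comp _)).comap _,
      fun t ht => ⟨t, ht, rfl⟩, ?_⟩
    rintro ⟨t, ht, hts⟩
    refine hi t ht fun j hj => ?_
    obtain ⟨j', rfl⟩ := Fin.exists_succAbove_eq hj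
    exact congrFun hts j'
  push Not at hess
  obtain ⟨T, hUT, hT, hTU, hcrit⟩ := exists_isCriticalTuple hU hs hsU hess
  by_cases hfun : IsFunctionalRel T
  · have hAT : ∀ i, ∀ a ∈ Function.eval i '' U, ∃ t ∈ T, t i = a :=
      fun _ _ ⟨t, ht, hta⟩ => ⟨t, hUT ht, hta⟩
    have hTgen : ⟨k, T⟩ ∈ genRels f := Or.inr (Or.inr ⟨k, two_le_of_not_mem hne hsU hs, _, T,
      hcrit.isSIOn hcons hT hTU hAT hfun, hTU, hT, hAT, hfun, ⟨s, hcrit⟩, rfl⟩)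
    exact ⟨T, by simpa using PPDefinable.of_mem hTgen id, hUT, hcrit.2.1⟩
  · exact exists_separating_of_not_isFunctionalRel hcons hmin (fun V hV hVp => ih k V hV hVp)
      hUT hT hTU hcrit hfun

theorem PreservesSet.ppDefinable_genRels (hcons : IsConservativeOp f) (hmin : IsMinorityOp f)
    {U : Set (Fin k → α)} (hU : PreservesSet f U) : PPDefinable (genRels f) k U := by
  induction hm : projMeasure U using Nat.strong_induction_on generalizing k U with
  | _ m ih =>
    subst hm
    exact PPDefinable.of_separating fun s hs =>
      exists_separating hcons hmin hU (fun _ V hV hVp => ih _ hV hVp rfl) hs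

end Separation

theorem stmt_19_general {α : Type*} [Fintype α] (f : α → α → α → α)
    (hcons : IsConservativeOp f) (hmin : IsMinorityOp f)
    (k : ℕ) (U : Set (Fin k → α)) :
    PreservesSet f U ↔
      PPDefinable
        {p : Σ r : ℕ, Set (Fin r → α) |
          (∃ X : Set α, p = ⟨1, unaryRel X⟩) ∨
          (∃ (A' B : Set α) (e : α → α), B ⊆ A' ∧ IsSIOn f B ∧
            (∀ x ∈ A', e x ∈ B) ∧ (∀ b ∈ B, ∃ x ∈ A', e x = b) ∧
            (∀ x ∈ A', ∀ y ∈ A', ∀ z ∈ A',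
              e (f x y z) = f (e x) (e y) (e z)) ∧
            (∀ b ∈ B, e b = b) ∧ p = ⟨2, graphRelOn A' e⟩) ∨
          (∃ n : ℕ, 2 ≤ n ∧ ∃ (A : Fin n → Set α) (T : Set (Fin n → α)),
            (∀ i, IsSIOn f (A i)) ∧
            (∀ t ∈ T, ∀ i, t i ∈ A i) ∧
            PreservesSet f T ∧
            (∀ (i : Fin n), ∀ a ∈ A i, ∃ t ∈ T, t i = a) ∧
            (∀ t ∈ T, ∀ t' ∈ T, ∀ i : Fin n,
              (∀ j, j ≠ i → t j = t' j) → t = t') ∧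
            (∃ s : Fin n → α, (∀ i, s i ∈ A i) ∧ s ∉ T ∧
              (∀ S : Set (Fin n → α), (∀ t ∈ S, ∀ i, t i ∈ A i) →
                PreservesSet f S → T ⊂ S → s ∈ S) ∧
              (∀ i : Fin n, ∃ t ∈ T, ∀ j, j ≠ i → t j = s j)) ∧
            p = ⟨n, T⟩)}
        k U :=
  ⟨fun hU => hU.ppDefinable_genRels hcons hmin,
    fun hU => hU.preservesSet fun _ hp => preservesSet_of_mem_genRels hcons hp⟩

/-- Theorem: a relation over a finite conservative minority algebra is
invariant iff it is primitively positively definable from the unary relations,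
the subdirect transversal endomorphism graphs, and the subdirect functional
multisorted critical relations over subdirectly irreducible subalgebras. -/
theorem stmt_19 {α : Type*} [Fintype α] (f : α → α → α → α)
    (hcons : IsConservativeOp f) (hmin : IsMinorityOp f)
    (k : ℕ) (hk : 1 ≤ k) (U : Set (Fin k → α)) :
    PreservesSet f U ↔
      PPDefinable
        {p : Σ r : ℕ, Set (Fin r → α) |
          (∃ X : Set α, p = ⟨1, unaryRel X⟩) ∨
          (∃ (A' B : Set α) (e : α → α), B ⊆ A' ∧ IsSIOn f B ∧
            (∀ x ∈ A', e x ∈ B) ∧ (∀ b ∈ B, ∃ x ∈ A', e x = b) ∧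
            (∀ x ∈ A', ∀ y ∈ A', ∀ z ∈ A',
              e (f x y z) = f (e x) (e y) (e z)) ∧
            (∀ b ∈ B, e b = b) ∧ p = ⟨2, graphRelOn A' e⟩) ∨
          (∃ n : ℕ, 2 ≤ n ∧ ∃ (A : Fin n → Set α) (T : Set (Fin n → α)),
            (∀ i, IsSIOn f (A i)) ∧
            (∀ t ∈ T, ∀ i, t i ∈ A i) ∧
            PreservesSet f T ∧
            (∀ (i : Fin n), ∀ a ∈ A i, ∃ t ∈ T, t i = a) ∧
            (∀ t ∈ T, ∀ t' ∈ T, ∀ i : Fin n,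
              (∀ j, j ≠ i → t j = t' j) → t = t') ∧
            (∃ s : Fin n → α, (∀ i, s i ∈ A i) ∧ s ∉ T ∧
              (∀ S : Set (Fin n → α), (∀ t ∈ S, ∀ i, t i ∈ A i) →
                PreservesSet f S → T ⊂ S → s ∈ S) ∧
              (∀ i : Fin n, ∃ t ∈ T, ∀ j, j ≠ i → t j = s j)) ∧
            p = ⟨n, T⟩)}
        k U :=
  stmt_19_general f hcons hmin k U
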